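/- arXiv:1806.09794 — 7 statements merged into one kernel-verified Lean document; each statement's English description precedes it below -/
import Mathlib

section
/- In the real associative algebra H = H_{α,β,γ} with generators e₁,e₂,e₃ and relations e₁²=e₂²=e₃²=-1, e₁e₂+e₂e₁=2α, e₂e₃+e₃e₂=2β, e₃e₁+e₁e₃=2γ, the element c = βe₁ - γe₂ + αe₃ - e₁e₂e₃ is central, i.e., c·eᵢ = eᵢ·c for i = 1,2,3. -/
/-- In `H_{α,β,γ}`, the element `c = βe₁ - γe₂ + αe₃ - e₁e₂e₃` is central,
i.e. commutes with each generator `eᵢ`. -/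
theorem stmt_2 {A : Type*} [Ring A] [Algebra ℝ A] (α β γ : ℝ) (e₁ e₂ e₃ : A)
    (h₁ : e₁ * e₁ = -1) (h₂ : e₂ * e₂ = -1) (h₃ : e₃ * e₃ = -1)
    (h₁₂ : e₁ * e₂ + e₂ * e₁ = algebraMap ℝ A (2 * α))
    (h₂₃ : e₂ * e₃ + e₃ * e₂ = algebraMap ℝ A (2 * β))
    (h₃₁ : e₃ * e₁ + e₁ * e₃ = algebraMap ℝ A (2 * γ)) :
    (β • e₁ - γ • e₂ + α • e₃ - e₁ * e₂ * e₃) * e₁ =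
        e₁ * (β • e₁ - γ • e₂ + α • e₃ - e₁ * e₂ * e₃) ∧
      (β • e₁ - γ • e₂ + α • e₃ - e₁ * e₂ * e₃) * e₂ =
        e₂ * (β • e₁ - γ • e₂ + α • e₃ - e₁ * e₂ * e₃) ∧
      (β • e₁ - γ • e₂ + α • e₃ - e₁ * e₂ * e₃) * e₃ =
        e₃ * (β • e₁ - γ • e₂ + α • e₃ - e₁ * e₂ * e₃) := by
  rw [Algebra.algebraMap_eq_smul_one] at h₁₂ h₂₃ h₃₁
  refine ⟨?_, ?_, ?_⟩
  · linear_combination (norm := (noncomm_ring; match_scalars <;> (push_cast [zsmul_eq_mul, nsmul_eq_mul]; ring)))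
      (-γ) • h₁₂ + α • h₃₁ - e₁ * e₂ * h₃₁ + e₁ * h₁₂ * e₃
  · linear_combination (norm := (noncomm_ring; match_scalars <;> (push_cast [zsmul_eq_mul, nsmul_eq_mul]; ring)))
      (-β) • h₁₂ + α • h₂₃ - e₁ * e₂ * h₂₃ + h₁₂ * e₂ * e₃
  · linear_combination (norm := (noncomm_ring; match_scalars <;> (push_cast [zsmul_eq_mul, nsmul_eq_mul]; ring)))
      (-β) • h₃₁ + γ • h₂₃ + h₃₁ * e₂ * e₃ - e₁ * h₂₃ * e₃
end

section
/- In the algebra H_{α,β,γ}, the central element c = βe₁ - γe₂ + αe₃ - e₁e₂e₃ satisfies c² = 1 - α² - β² - γ² - 2αβγ, which equals minus the determinant of the 3×3 symmetric matrix Q with diagonal entries -1 and off-diagonal entries Q₁₂=α, Q₂₃=β, Q₁₃=γ. -/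
/-- In `H_{α,β,γ}`, the central element `c = βe₁ - γe₂ + αe₃ - e₁e₂e₃`
satisfies `c² = 1 - α² - β² - γ² - 2αβγ = -det Q_{α,β,γ}`. -/
theorem stmt_3 {A : Type*} [Ring A] [Algebra ℝ A] (α β γ : ℝ) (e₁ e₂ e₃ : A)
    (h₁ : e₁ * e₁ = -1) (h₂ : e₂ * e₂ = -1) (h₃ : e₃ * e₃ = -1)
    (h₁₂ : e₁ * e₂ + e₂ * e₁ = algebraMap ℝ A (2 * α))
    (h₂₃ : e₂ * e₃ + e₃ * e₂ = algebraMap ℝ A (2 * β))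
    (h₃₁ : e₃ * e₁ + e₁ * e₃ = algebraMap ℝ A (2 * γ)) :
    (β • e₁ - γ • e₂ + α • e₃ - e₁ * e₂ * e₃) *
        (β • e₁ - γ • e₂ + α • e₃ - e₁ * e₂ * e₃) =
      algebraMap ℝ A (1 - α ^ 2 - β ^ 2 - γ ^ 2 - 2 * α * β * γ) ∧
    (1 - α ^ 2 - β ^ 2 - γ ^ 2 - 2 * α * β * γ) =
      -Matrix.det !![(-1 : ℝ), α, γ; α, -1, β; γ, β, -1] := by
  constructor
  · have h₂₁ : e₂ * e₁ = (2 * α) • (1 : A) - e₁ * e₂ := by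
      rw [← Algebra.algebraMap_eq_smul_one, ← h₁₂]; abel
    have h₃₂ : e₃ * e₂ = (2 * β) • (1 : A) - e₂ * e₃ := by
      rw [← Algebra.algebraMap_eq_smul_one, ← h₂₃]; abel
    have h₃₁' : e₃ * e₁ = (2 * γ) • (1 : A) - e₁ * e₃ := by
      rw [← Algebra.algebraMap_eq_smul_one, ← h₃₁]; abel
    have s₁ : ∀ x : A, e₁ * (e₁ * x) = -x := by
      intro x; rw [← mul_assoc, h₁, neg_one_mul]
    have s₂ : ∀ x : A, e₂ * (e₂ * x) = -x := by
      intro x; rw [← mul_assoc, h₂, neg_one_mul]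
    have s₃ : ∀ x : A, e₃ * (e₃ * x) = -x := by
      intro x; rw [← mul_assoc, h₃, neg_one_mul]
    have t₂₁ : ∀ x : A, e₂ * (e₁ * x) = (2 * α) • x - e₁ * (e₂ * x) := by
      intro x
      rw [← mul_assoc, h₂₁, sub_mul, smul_mul_assoc, one_mul, mul_assoc]
    have t₃₂ : ∀ x : A, e₃ * (e₂ * x) = (2 * β) • x - e₂ * (e₃ * x) := by
      intro x
      rw [← mul_assoc, h₃₂, sub_mul, smul_mul_assoc, one_mul, mul_assoc]
    have t₃₁ : ∀ x : A, e₃ * (e₁ * x) = (2 * γ) • x - e₁ * (e₃ * x) := by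
      intro x
      rw [← mul_assoc, h₃₁', sub_mul, smul_mul_assoc, one_mul, mul_assoc]
    rw [Algebra.algebraMap_eq_smul_one]
    simp only [mul_add, add_mul, mul_sub, sub_mul, mul_assoc, smul_mul_assoc,
      mul_smul_comm, h₁, h₂, h₃, h₂₁, h₃₂, h₃₁', s₁, s₂, s₃, t₂₁, t₃₂, t₃₁,
      mul_one, one_mul, mul_neg, neg_mul, smul_sub, smul_add, smul_neg,
      smul_smul, neg_neg, sub_eq_add_neg, neg_add]
    match_scalars <;> ring
  · simp [Matrix.det_fin_three]; ring
end

section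
/- In the algebra H_{α,β,γ}, the identity c·(β - e₂e₃) = (β² - 1)e₁ - (βγ + α)e₂ - (αβ + γ)e₃ holds, where c = βe₁ - γe₂ + αe₃ - e₁e₂e₃. In particular, multiplication by c maps the span of β - e₂e₃, γ - e₃e₁, α - e₁e₂ into the span of e₁, e₂, e₃. -/
/-- In `H_{α,β,γ}`, with `c = βe₁ - γe₂ + αe₃ - e₁e₂e₃`,
`c(β - e₂e₃) = (β² - 1)e₁ - (βγ + α)e₂ - (αβ + γ)e₃`; in particular multiplication by
`c` maps the span of `β - e₂e₃, γ - e₃e₁, α - e₁e₂` into the span of `e₁, e₂, e₃`. -/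
theorem stmt_9 {A : Type*} [Ring A] [Algebra ℝ A] (α β γ : ℝ) (e₁ e₂ e₃ : A)
    (h₁ : e₁ * e₁ = -1) (h₂ : e₂ * e₂ = -1) (h₃ : e₃ * e₃ = -1)
    (h₁₂ : e₁ * e₂ + e₂ * e₁ = algebraMap ℝ A (2 * α))
    (h₂₃ : e₂ * e₃ + e₃ * e₂ = algebraMap ℝ A (2 * β))
    (h₃₁ : e₃ * e₁ + e₁ * e₃ = algebraMap ℝ A (2 * γ)) :
    (β • e₁ - γ • e₂ + α • e₃ - e₁ * e₂ * e₃) * (algebraMap ℝ A β - e₂ * e₃) =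
        (β ^ 2 - 1) • e₁ - (β * γ + α) • e₂ - (α * β + γ) • e₃ ∧
      ∀ x ∈ Submodule.span ℝ ({algebraMap ℝ A β - e₂ * e₃, algebraMap ℝ A γ - e₃ * e₁,
          algebraMap ℝ A α - e₁ * e₂} : Set A),
        (β • e₁ - γ • e₂ + α • e₃ - e₁ * e₂ * e₃) * x ∈
          Submodule.span ℝ ({e₁, e₂, e₃} : Set A) := by
  have s21 : e₂ * e₁ = (2*α) • (1:A) - e₁ * e₂ := by
    rw [← Algebra.algebraMap_eq_smul_one]; linear_combination (norm := noncomm_ring) h₁₂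
  have s32 : e₃ * e₂ = (2*β) • (1:A) - e₂ * e₃ := by
    rw [← Algebra.algebraMap_eq_smul_one]; linear_combination (norm := noncomm_ring) h₂₃
  have s31 : e₃ * e₁ = (2*γ) • (1:A) - e₁ * e₃ := by
    rw [← Algebra.algebraMap_eq_smul_one]; linear_combination (norm := noncomm_ring) h₃₁
  have s21' : ∀ x : A, e₂ * (e₁ * x) = (2*α) • x - e₁ * (e₂ * x) := by
    intro x; rw [← mul_assoc, s21, sub_mul, smul_mul_assoc, one_mul, mul_assoc]
  have s32' : ∀ x : A, e₃ * (e₂ * x) = (2*β) • x - e₂ * (e₃ * x) := by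
    intro x; rw [← mul_assoc, s32, sub_mul, smul_mul_assoc, one_mul, mul_assoc]
  have s31' : ∀ x : A, e₃ * (e₁ * x) = (2*γ) • x - e₁ * (e₃ * x) := by
    intro x; rw [← mul_assoc, s31, sub_mul, smul_mul_assoc, one_mul, mul_assoc]
  have q₁ : ∀ x : A, e₁ * (e₁ * x) = -x := by
    intro x; rw [← mul_assoc, h₁, neg_one_mul]
  have q₂ : ∀ x : A, e₂ * (e₂ * x) = -x := by
    intro x; rw [← mul_assoc, h₂, neg_one_mul]
  have q₃ : ∀ x : A, e₃ * (e₃ * x) = -x := by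
    intro x; rw [← mul_assoc, h₃, neg_one_mul]
  have key1 : (β • e₁ - γ • e₂ + α • e₃ - e₁ * e₂ * e₃) * (algebraMap ℝ A β - e₂ * e₃) =
      (β ^ 2 - 1) • e₁ - (β * γ + α) • e₂ - (α * β + γ) • e₃ := by
    rw [Algebra.algebraMap_eq_smul_one]
    simp only [mul_sub, sub_mul, add_mul, mul_add, smul_mul_assoc, mul_smul_comm, mul_one, one_mul,
      mul_assoc, mul_neg, neg_mul, s21', s32', s31', q₁, q₂, q₃, s21, s32, s31,
      h₁, h₂, h₃, smul_sub, smul_neg, smul_smul]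
    module
  have key2 : (β • e₁ - γ • e₂ + α • e₃ - e₁ * e₂ * e₃) * (algebraMap ℝ A γ - e₃ * e₁) =
      (-(β * γ + α)) • e₁ + (γ ^ 2 - 1) • e₂ - (α * γ + β) • e₃ := by
    rw [Algebra.algebraMap_eq_smul_one]
    simp only [mul_sub, sub_mul, add_mul, mul_add, smul_mul_assoc, mul_smul_comm, mul_one, one_mul,
      mul_assoc, mul_neg, neg_mul, s21', s32', s31', q₁, q₂, q₃, s21, s32, s31,
      h₁, h₂, h₃, smul_sub, smul_neg, smul_smul]
    module
  have key3 : (β • e₁ - γ • e₂ + α • e₃ - e₁ * e₂ * e₃) * (algebraMap ℝ A α - e₁ * e₂) =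
      (-(α * β + γ)) • e₁ - (α * γ + β) • e₂ + (α ^ 2 - 1) • e₃ := by
    rw [Algebra.algebraMap_eq_smul_one]
    simp only [mul_sub, sub_mul, add_mul, mul_add, smul_mul_assoc, mul_smul_comm, mul_one, one_mul,
      mul_assoc, mul_neg, neg_mul, s21', s32', s31', q₁, q₂, q₃, s21, s32, s31,
      h₁, h₂, h₃, smul_sub, smul_neg, smul_smul]
    module
  have m1 : e₁ ∈ Submodule.span ℝ ({e₁, e₂, e₃} : Set A) :=
    Submodule.subset_span (by simp)
  have m2 : e₂ ∈ Submodule.span ℝ ({e₁, e₂, e₃} : Set A) :=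
    Submodule.subset_span (by simp)
  have m3 : e₃ ∈ Submodule.span ℝ ({e₁, e₂, e₃} : Set A) :=
    Submodule.subset_span (by simp)
  refine ⟨key1, ?_⟩
  intro x hx
  induction hx using Submodule.span_induction with
  | mem y hy =>
    rcases hy with rfl | rfl | rfl
    · rw [key1]
      exact sub_mem (sub_mem (Submodule.smul_mem _ _ m1) (Submodule.smul_mem _ _ m2))
        (Submodule.smul_mem _ _ m3)
    · rw [key2]
      exact sub_mem (add_mem (Submodule.smul_mem _ _ m1) (Submodule.smul_mem _ _ m2))
        (Submodule.smul_mem _ _ m3)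
    · rw [key3]
      exact add_mem (sub_mem (Submodule.smul_mem _ _ m1) (Submodule.smul_mem _ _ m2))
        (Submodule.smul_mem _ _ m3)
  | zero => simp
  | add y z _ _ hy hz => rw [mul_add]; exact add_mem hy hz
  | smul r y _ hy => rw [mul_smul_comm]; exact Submodule.smul_mem _ _ hy
end

section
/- In the algebra H_{α,β,γ}, the identity c·e₁ = -(β - e₂e₃) + α(γ - e₃e₁) + γ(α - e₁e₂) holds, where c = βe₁ - γe₂ + αe₃ - e₁e₂e₃. In particular, multiplication by c maps the span of e₁, e₂, e₃ into the span of β - e₂e₃, γ - e₃e₁, α - e₁e₂. -/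
/-- In `H_{α,β,γ}`, with `c = βe₁ - γe₂ + αe₃ - e₁e₂e₃`,
`c·e₁ = -(β - e₂e₃) + α(γ - e₃e₁) + γ(α - e₁e₂)`; in particular multiplication by `c`
maps the span of `e₁, e₂, e₃` into the span of `β - e₂e₃, γ - e₃e₁, α - e₁e₂`. -/
theorem stmt_10 {A : Type*} [Ring A] [Algebra ℝ A] (α β γ : ℝ) (e₁ e₂ e₃ : A)
    (h₁ : e₁ * e₁ = -1) (h₂ : e₂ * e₂ = -1) (h₃ : e₃ * e₃ = -1)
    (h₁₂ : e₁ * e₂ + e₂ * e₁ = algebraMap ℝ A (2 * α))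
    (h₂₃ : e₂ * e₃ + e₃ * e₂ = algebraMap ℝ A (2 * β))
    (h₃₁ : e₃ * e₁ + e₁ * e₃ = algebraMap ℝ A (2 * γ)) :
    (β • e₁ - γ • e₂ + α • e₃ - e₁ * e₂ * e₃) * e₁ =
        -(algebraMap ℝ A β - e₂ * e₃) + α • (algebraMap ℝ A γ - e₃ * e₁) +
          γ • (algebraMap ℝ A α - e₁ * e₂) ∧
      ∀ x ∈ Submodule.span ℝ ({e₁, e₂, e₃} : Set A),
        (β • e₁ - γ • e₂ + α • e₃ - e₁ * e₂ * e₃) * x ∈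
          Submodule.span ℝ ({algebraMap ℝ A β - e₂ * e₃, algebraMap ℝ A γ - e₃ * e₁,
            algebraMap ℝ A α - e₁ * e₂} : Set A) := by
  have p21 : e₂ * e₁ = (2*α) • (1:A) - e₁ * e₂ := by
    rw [eq_sub_iff_add_eq, add_comm, h₁₂, Algebra.algebraMap_eq_smul_one]
  have p32 : e₃ * e₂ = (2*β) • (1:A) - e₂ * e₃ := by
    rw [eq_sub_iff_add_eq, add_comm, h₂₃, Algebra.algebraMap_eq_smul_one]
  have p31 : e₃ * e₁ = (2*γ) • (1:A) - e₁ * e₃ := by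
    rw [eq_sub_iff_add_eq, h₃₁, Algebra.algebraMap_eq_smul_one]
  have s21 : ∀ x : A, e₂ * (e₁ * x) = (2*α) • x - e₁ * (e₂ * x) := fun x => by
    rw [← mul_assoc, p21, sub_mul, smul_mul_assoc, one_mul, mul_assoc]
  have s32 : ∀ x : A, e₃ * (e₂ * x) = (2*β) • x - e₂ * (e₃ * x) := fun x => by
    rw [← mul_assoc, p32, sub_mul, smul_mul_assoc, one_mul, mul_assoc]
  have s31 : ∀ x : A, e₃ * (e₁ * x) = (2*γ) • x - e₁ * (e₃ * x) := fun x => by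
    rw [← mul_assoc, p31, sub_mul, smul_mul_assoc, one_mul, mul_assoc]
  have s11 : ∀ x : A, e₁ * (e₁ * x) = -x := fun x => by
    rw [← mul_assoc, h₁, neg_one_mul]
  have s22 : ∀ x : A, e₂ * (e₂ * x) = -x := fun x => by
    rw [← mul_assoc, h₂, neg_one_mul]
  have s33 : ∀ x : A, e₃ * (e₃ * x) = -x := fun x => by
    rw [← mul_assoc, h₃, neg_one_mul]
  have key1 : (β • e₁ - γ • e₂ + α • e₃ - e₁ * e₂ * e₃) * e₁ =
      -(algebraMap ℝ A β - e₂ * e₃) + α • (algebraMap ℝ A γ - e₃ * e₁) +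
        γ • (algebraMap ℝ A α - e₁ * e₂) := by
    simp only [Algebra.algebraMap_eq_smul_one, mul_add, add_mul, mul_sub, sub_mul,
      smul_mul_assoc, mul_smul_comm, mul_assoc, mul_one, one_mul,
      s21, s32, s31, s11, s22, s33, p21, p32, p31, h₁, h₂, h₃,
      smul_sub, smul_add, smul_neg, mul_neg, neg_mul]
    module
  have key2 : (β • e₁ - γ • e₂ + α • e₃ - e₁ * e₂ * e₃) * e₂ =
      α • (algebraMap ℝ A β - e₂ * e₃) - (algebraMap ℝ A γ - e₃ * e₁) +
        β • (algebraMap ℝ A α - e₁ * e₂) := by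
    simp only [Algebra.algebraMap_eq_smul_one, mul_add, add_mul, mul_sub, sub_mul,
      smul_mul_assoc, mul_smul_comm, mul_assoc, mul_one, one_mul,
      s21, s32, s31, s11, s22, s33, p21, p32, p31, h₁, h₂, h₃,
      smul_sub, smul_add, smul_neg, mul_neg, neg_mul]
    module
  have key3 : (β • e₁ - γ • e₂ + α • e₃ - e₁ * e₂ * e₃) * e₃ =
      γ • (algebraMap ℝ A β - e₂ * e₃) + β • (algebraMap ℝ A γ - e₃ * e₁) -
        (algebraMap ℝ A α - e₁ * e₂) := by
    simp only [Algebra.algebraMap_eq_smul_one, mul_add, add_mul, mul_sub, sub_mul,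
      smul_mul_assoc, mul_smul_comm, mul_assoc, mul_one, one_mul,
      s21, s32, s31, s11, s22, s33, p21, p32, p31, h₁, h₂, h₃,
      smul_sub, smul_add, smul_neg, mul_neg, neg_mul]
    module
  set T := Submodule.span ℝ ({algebraMap ℝ A β - e₂ * e₃, algebraMap ℝ A γ - e₃ * e₁,
      algebraMap ℝ A α - e₁ * e₂} : Set A) with hT
  have m1 : algebraMap ℝ A β - e₂ * e₃ ∈ T := Submodule.subset_span (by simp)
  have m2 : algebraMap ℝ A γ - e₃ * e₁ ∈ T := Submodule.subset_span (by simp)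
  have m3 : algebraMap ℝ A α - e₁ * e₂ ∈ T := Submodule.subset_span (by simp)
  refine ⟨key1, ?_⟩
  intro x hx
  induction hx using Submodule.span_induction with
  | mem y hy =>
    rcases hy with rfl | rfl | rfl
    · rw [key1]; exact add_mem (add_mem (neg_mem m1) (Submodule.smul_mem _ _ m2))
        (Submodule.smul_mem _ _ m3)
    · rw [key2]; exact add_mem (sub_mem (Submodule.smul_mem _ _ m1) m2)
        (Submodule.smul_mem _ _ m3)
    · rw [key3]; exact sub_mem (add_mem (Submodule.smul_mem _ _ m1)
        (Submodule.smul_mem _ _ m2)) m3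
  | zero => rw [mul_zero]; exact zero_mem T
  | add y z _ _ hy hz => rw [mul_add]; exact add_mem hy hz
  | smul r y _ hy => rw [mul_smul_comm]; exact Submodule.smul_mem _ _ hy
end

section
/- If det Q_{α,β,γ} > 0 (where Q_{α,β,γ} = [[-1,α,γ],[α,-1,β],[γ,β,-1]]), then there exist real numbers x, y such that the element v = x(α - e₁e₂) + y(γ - e₃e₁) in H_{α,β,γ} satisfies v² = -1, and v anticommutes with e₁; consequently, the subalgebra generated by e₁ and v is isomorphic to the quaternion algebra ℍ. -/
open scoped Quaternion

/-- The defining relations of the algebra `H_{α,β,γ}`. -/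
inductive HRel (α β γ : ℝ) : FreeAlgebra ℝ (Fin 3) → FreeAlgebra ℝ (Fin 3) → Prop
  | sq1 : HRel α β γ (FreeAlgebra.ι ℝ 0 * FreeAlgebra.ι ℝ 0) (-1)
  | sq2 : HRel α β γ (FreeAlgebra.ι ℝ 1 * FreeAlgebra.ι ℝ 1) (-1)
  | sq3 : HRel α β γ (FreeAlgebra.ι ℝ 2 * FreeAlgebra.ι ℝ 2) (-1)
  | ac12 : HRel α β γ (FreeAlgebra.ι ℝ 0 * FreeAlgebra.ι ℝ 1 + FreeAlgebra.ι ℝ 1 * FreeAlgebra.ι ℝ 0)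
      (algebraMap ℝ (FreeAlgebra ℝ (Fin 3)) (2 * α))
  | ac23 : HRel α β γ (FreeAlgebra.ι ℝ 1 * FreeAlgebra.ι ℝ 2 + FreeAlgebra.ι ℝ 2 * FreeAlgebra.ι ℝ 1)
      (algebraMap ℝ (FreeAlgebra ℝ (Fin 3)) (2 * β))
  | ac31 : HRel α β γ (FreeAlgebra.ι ℝ 2 * FreeAlgebra.ι ℝ 0 + FreeAlgebra.ι ℝ 0 * FreeAlgebra.ι ℝ 2)
      (algebraMap ℝ (FreeAlgebra ℝ (Fin 3)) (2 * γ))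

/-- The algebra `H_{α,β,γ}`. -/
abbrev HAlg (α β γ : ℝ) : Type := RingQuot (HRel α β γ)

/-- The generators `e₁, e₂, e₃` of `H_{α,β,γ}`. -/
noncomputable def eH (α β γ : ℝ) (i : Fin 3) : HAlg α β γ :=
  RingQuot.mkAlgHom ℝ (HRel α β γ) (FreeAlgebra.ι ℝ i)

/-!
Put `u = α - e₁e₂` and `w = γ - e₃e₁ = -(γ - e₁e₃)`. Both anticommute with `e₁`, and `u² = α² - 1`,
`w² = γ² - 1`, `uw + wu = -2(αγ + β)` are scalars, so `(xu + yw)²` is the value at `(x, y)` of the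
binary form `(α² - 1)x² - 2(αγ + β)xy + (γ² - 1)y²`. Its discriminant is `4 det Q_{α,β,γ} > 0`, so
the form is indefinite and takes the value `-1`. Then `e₁` and `v = xu + yw` are anticommuting
square roots of `-1`; they span a copy of `ℍ` because `H_{α,β,γ}` is nonzero: it maps to the
Clifford algebra of the quadratic form with Gram matrix `Q_{α,β,γ}`.
-/

theorem exists_quadratic_eq_of_discrim_pos {a b c : ℝ} (hd : 0 < discrim a b c) (t : ℝ) :
    ∃ x y : ℝ, a * x ^ 2 + b * x * y + c * y ^ 2 = t := by
  rw [discrim] at hd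
  rcases eq_or_ne a 0 with rfl | ha
  · have hb : b ≠ 0 := by rintro rfl; simp at hd
    exact ⟨(t - c) / b, 1, by field_simp; ring⟩
  · -- with `s² = b² - 4ac`: `4a(ax² + bxy + cy²) = (2ax + by - sy)(2ax + by + sy)`, and we make
    -- the two factors `1` and `4at`
    have hs : √(b ^ 2 - 4 * a * c) ^ 2 = b ^ 2 - 4 * a * c := Real.sq_sqrt hd.le
    have hs0 : √(b ^ 2 - 4 * a * c) ≠ 0 := (Real.sqrt_pos.2 hd).ne'
    set s := √(b ^ 2 - 4 * a * c)
    refine ⟨((4 * a * t + 1) / 2 - b * ((4 * a * t - 1) / (2 * s))) / (2 * a),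
      (4 * a * t - 1) / (2 * s), ?_⟩
    field_simp
    linear_combination (4 * a * t - 1) ^ 2 * hs

theorem discrim_eq_four_mul_det (α β γ : ℝ) :
    discrim (α ^ 2 - 1) (-2 * (α * γ + β)) (γ ^ 2 - 1) =
      4 * Matrix.det !![(-1 : ℝ), α, γ; α, -1, β; γ, β, -1] := by
  rw [discrim, Matrix.det_fin_three]
  simp only [Matrix.of_apply, Matrix.cons_val', Matrix.cons_val_zero, Matrix.cons_val_one,
    Matrix.cons_val, Matrix.cons_val_fin_one]
  ring

section Relations

variable {A : Type*} [Ring A] [Algebra ℝ A] {e f g : A} {α β γ : ℝ}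

theorem smul_add_smul_mul_self {a b : A} {p q r : ℝ} (ha : a * a = algebraMap ℝ A p)
    (hb : b * b = algebraMap ℝ A q) (hab : a * b + b * a = algebraMap ℝ A r) (x y : ℝ) :
    (x • a + y • b) * (x • a + y • b) = algebraMap ℝ A (p * x ^ 2 + r * x * y + q * y ^ 2) := by
  calc (x • a + y • b) * (x • a + y • b)
      = (x ^ 2) • (a * a) + (x * y) • (a * b + b * a) + (y ^ 2) • (b * b) := by
        simp only [add_mul, mul_add, smul_mul_smul_comm]; module
    _ = _ := by
        rw [ha, hb, hab]
        simp only [Algebra.smul_def, ← map_mul, ← map_add]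
        ring_nf

theorem smul_add_smul_anticomm {a b : A} (ha : a * e + e * a = 0) (hb : b * e + e * b = 0)
    (x y : ℝ) : (x • a + y • b) * e + e * (x • a + y • b) = 0 := by
  calc (x • a + y • b) * e + e * (x • a + y • b)
      = x • (a * e + e * a) + y • (b * e + e * b) := by
        simp only [add_mul, mul_add, smul_mul_assoc, mul_smul_comm, smul_add]; abel
    _ = 0 := by rw [ha, hb, smul_zero, smul_zero, add_zero]

theorem algebraMap_sub_mul_anticomm (hef : e * f + f * e = algebraMap ℝ A (2 * α)) :
    (algebraMap ℝ A α - e * f) * e + e * (algebraMap ℝ A α - e * f) = 0 := by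
  rw [map_mul, map_ofNat] at hef
  linear_combination (norm := noncomm_ring) -(e * hef) + Algebra.commutes α e

theorem algebraMap_sub_mul_mul_self (he : e * e = -1) (hf : f * f = -1)
    (hef : e * f + f * e = algebraMap ℝ A (2 * α)) :
    (algebraMap ℝ A α - e * f) * (algebraMap ℝ A α - e * f) = algebraMap ℝ A (α ^ 2 - 1) := by
  rw [map_mul, map_ofNat] at hef
  rw [map_sub, map_pow, map_one]
  linear_combination (norm := noncomm_ring) e * hef * f - he * (f * f) + hf
    - Algebra.commutes α e * f + e * Algebra.commutes α f

theorem algebraMap_sub_mul_anticomm_algebraMap_sub_mul (he : e * e = -1)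
    (hef : e * f + f * e = algebraMap ℝ A (2 * α)) (hfg : f * g + g * f = algebraMap ℝ A (2 * β))
    (heg : e * g + g * e = algebraMap ℝ A (2 * γ)) :
    (algebraMap ℝ A α - e * f) * (algebraMap ℝ A γ - e * g) +
      (algebraMap ℝ A γ - e * g) * (algebraMap ℝ A α - e * f) =
        algebraMap ℝ A (2 * (α * γ + β)) := by
  simp only [map_mul, map_add, map_ofNat] at *
  linear_combination (norm := noncomm_ring) e * hef * g - he * (f * g) + e * heg * f
    - he * (g * f) + hfg - Algebra.commutes α e * g + e * Algebra.commutes α g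
    - Algebra.commutes γ e * f + e * Algebra.commutes γ f - Algebra.commutes α (algebraMap ℝ A γ)

theorem algebraMap_sub_mul_swap (hge : g * e + e * g = algebraMap ℝ A (2 * γ)) :
    algebraMap ℝ A γ - g * e = -(algebraMap ℝ A γ - e * g) := by
  rw [map_mul, map_ofNat] at hge
  linear_combination (norm := noncomm_ring) -hge

theorem algebraMap_sub_mul_swap_anticomm (hge : g * e + e * g = algebraMap ℝ A (2 * γ)) :
    (algebraMap ℝ A γ - g * e) * e + e * (algebraMap ℝ A γ - g * e) = 0 := by
  rw [algebraMap_sub_mul_swap hge, neg_mul, mul_neg, ← neg_add,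
    algebraMap_sub_mul_anticomm ((add_comm _ _).trans hge), neg_zero]

theorem algebraMap_sub_mul_swap_mul_self (he : e * e = -1) (hg : g * g = -1)
    (hge : g * e + e * g = algebraMap ℝ A (2 * γ)) :
    (algebraMap ℝ A γ - g * e) * (algebraMap ℝ A γ - g * e) = algebraMap ℝ A (γ ^ 2 - 1) := by
  rw [algebraMap_sub_mul_swap hge, neg_mul_neg]
  exact algebraMap_sub_mul_mul_self he hg ((add_comm _ _).trans hge)

theorem algebraMap_sub_mul_anticomm_algebraMap_sub_mul_swap (he : e * e = -1)
    (hef : e * f + f * e = algebraMap ℝ A (2 * α)) (hfg : f * g + g * f = algebraMap ℝ A (2 * β))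
    (hge : g * e + e * g = algebraMap ℝ A (2 * γ)) :
    (algebraMap ℝ A α - e * f) * (algebraMap ℝ A γ - g * e) +
      (algebraMap ℝ A γ - g * e) * (algebraMap ℝ A α - e * f) =
        algebraMap ℝ A (-2 * (α * γ + β)) := by
  rw [algebraMap_sub_mul_swap hge, mul_neg, neg_mul, ← neg_add,
    algebraMap_sub_mul_anticomm_algebraMap_sub_mul he hef hfg ((add_comm _ _).trans hge),
    ← map_neg, neg_mul]

theorem mul_self_eq_neg_one_of_relations (he : e * e = -1) (hf : f * f = -1) (hg : g * g = -1)
    (hef : e * f + f * e = algebraMap ℝ A (2 * α)) (hfg : f * g + g * f = algebraMap ℝ A (2 * β))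
    (hge : g * e + e * g = algebraMap ℝ A (2 * γ)) {x y : ℝ}
    (hxy : (α ^ 2 - 1) * x ^ 2 + -2 * (α * γ + β) * x * y + (γ ^ 2 - 1) * y ^ 2 = -1) :
    (x • (algebraMap ℝ A α - e * f) + y • (algebraMap ℝ A γ - g * e)) *
      (x • (algebraMap ℝ A α - e * f) + y • (algebraMap ℝ A γ - g * e)) = -1 := by
  rw [smul_add_smul_mul_self (algebraMap_sub_mul_mul_self he hf hef)
    (algebraMap_sub_mul_swap_mul_self he hg hge)
    (algebraMap_sub_mul_anticomm_algebraMap_sub_mul_swap he hef hfg hge), hxy, map_neg, map_one]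

theorem anticomm_of_relations (hef : e * f + f * e = algebraMap ℝ A (2 * α))
    (hge : g * e + e * g = algebraMap ℝ A (2 * γ)) (x y : ℝ) :
    (x • (algebraMap ℝ A α - e * f) + y • (algebraMap ℝ A γ - g * e)) * e +
      e * (x • (algebraMap ℝ A α - e * f) + y • (algebraMap ℝ A γ - g * e)) = 0 :=
  smul_add_smul_anticomm (algebraMap_sub_mul_anticomm hef) (algebraMap_sub_mul_swap_anticomm hge) x y

end Relations

theorem Quaternion.nonempty_adjoin_algEquiv_of_anticomm {R A : Type*} [Field R] [LinearOrder R]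
    [IsStrictOrderedRing R] [Ring A] [Algebra R A] [Nontrivial A] {i j : A} (hi : i * i = -1)
    (hj : j * j = -1) (hji : j * i + i * j = 0) :
    Nonempty (Algebra.adjoin R {i, j} ≃ₐ[R] ℍ[R]) := by
  let q : QuaternionAlgebra.Basis A (-1 : R) 0 (-1) :=
    { i, j, k := i * j
      i_mul_i := by rw [hi]; module
      j_mul_j := by rw [hj]; module
      i_mul_j := rfl
      j_mul_i := by rw [eq_neg_of_add_eq_zero_left hji]; module }
  -- injective, since `ℍ[R]` is a division ring and `A` is nontrivial
  let ψ : ℍ[R] →ₐ[R] A := q.liftHom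
  have hrange : ψ.range = Algebra.adjoin R {i, j} := by
    refine q.range_liftHom.trans (le_antisymm (Algebra.adjoin_le ?_) (Algebra.adjoin_mono ?_))
    · rintro _ (rfl | rfl | rfl)
      exacts [Algebra.subset_adjoin (by simp), Algebra.subset_adjoin (by simp),
        mul_mem (Algebra.subset_adjoin (by simp)) (Algebra.subset_adjoin (by simp))]
    · exact Set.insert_subset_insert (Set.singleton_subset_iff.2 (Set.mem_insert _ _))
  exact ⟨(Subalgebra.equivOfEq _ _ hrange.symm).trans
    (AlgEquiv.ofInjective ψ ψ.toRingHom.injective).symm⟩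

theorem Matrix.toQuadraticForm'_single {n R : Type*} [Fintype n] [DecidableEq n] [CommRing R]
    (M : Matrix n n R) (i : n) : M.toQuadraticForm' (Pi.single i 1) = M i i :=
  Matrix.toLinearMap₂'Aux_single _ _ M i i

theorem Matrix.polar_toQuadraticForm'_single {n R : Type*} [Fintype n] [DecidableEq n]
    [CommRing R] (M : Matrix n n R) (i j : n) :
    QuadraticMap.polar M.toQuadraticForm' (Pi.single i 1) (Pi.single j 1) = M i j + M j i := by
  rw [Matrix.toQuadraticForm', LinearMap.BilinMap.polar_toQuadraticMap]
  exact congrArg₂ (· + ·) (Matrix.toLinearMap₂'Aux_single _ _ M i j)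
    (Matrix.toLinearMap₂'Aux_single _ _ M j i)

section HAlg

variable (α β γ : ℝ)

noncomputable def HAlg.toCliffordAlgebra :
    HAlg α β γ →ₐ[ℝ] CliffordAlgebra (!![(-1 : ℝ), α, γ; α, -1, β; γ, β, -1]).toQuadraticForm' :=
  RingQuot.liftAlgHom ℝ ⟨FreeAlgebra.lift ℝ fun i => CliffordAlgebra.ι _ (Pi.single i 1), by
    rintro _ _ (_ | _ | _ | _ | _ | _) <;>
      simp [CliffordAlgebra.ι_sq_scalar, CliffordAlgebra.ι_mul_ι_add_swap,
        Matrix.toQuadraticForm'_single, Matrix.polar_toQuadraticForm'_single, two_mul]⟩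

instance : Nontrivial (HAlg α β γ) :=
  (HAlg.toCliffordAlgebra α β γ).toRingHom.domain_nontrivial

theorem eH_mul_self (i : Fin 3) : eH α β γ i * eH α β γ i = -1 := by
  fin_cases i
  exacts [by simpa [eH] using RingQuot.mkAlgHom_rel ℝ (.sq1 : HRel α β γ _ _),
    by simpa [eH] using RingQuot.mkAlgHom_rel ℝ (.sq2 : HRel α β γ _ _),
    by simpa [eH] using RingQuot.mkAlgHom_rel ℝ (.sq3 : HRel α β γ _ _)]

theorem eH_mul_add_swap_zero_one :
    eH α β γ 0 * eH α β γ 1 + eH α β γ 1 * eH α β γ 0 = algebraMap ℝ (HAlg α β γ) (2 * α) := by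
  simpa [eH] using RingQuot.mkAlgHom_rel ℝ (.ac12 : HRel α β γ _ _)

theorem eH_mul_add_swap_one_two :
    eH α β γ 1 * eH α β γ 2 + eH α β γ 2 * eH α β γ 1 = algebraMap ℝ (HAlg α β γ) (2 * β) := by
  simpa [eH] using RingQuot.mkAlgHom_rel ℝ (.ac23 : HRel α β γ _ _)

theorem eH_mul_add_swap_two_zero :
    eH α β γ 2 * eH α β γ 0 + eH α β γ 0 * eH α β γ 2 = algebraMap ℝ (HAlg α β γ) (2 * γ) := by
  simpa [eH] using RingQuot.mkAlgHom_rel ℝ (.ac31 : HRel α β γ _ _)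

end HAlg

/-- If `det Q_{α,β,γ} > 0`, there are reals `x, y` with
`v = x(α - e₁e₂) + y(γ - e₃e₁)` satisfying `v² = -1`, `v` anticommuting with `e₁`,
and the subalgebra generated by `e₁, v` isomorphic to `ℍ`. -/
theorem stmt_12 (α β γ : ℝ)
    (hQ : 0 < Matrix.det !![(-1 : ℝ), α, γ; α, -1, β; γ, β, -1]) :
    ∃ (x y : ℝ) (v : HAlg α β γ),
      v = x • (algebraMap ℝ (HAlg α β γ) α - eH α β γ 0 * eH α β γ 1) +
            y • (algebraMap ℝ (HAlg α β γ) γ - eH α β γ 2 * eH α β γ 0) ∧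
        v * v = -1 ∧
        v * eH α β γ 0 + eH α β γ 0 * v = 0 ∧
        Nonempty ((Algebra.adjoin ℝ ({eH α β γ 0, v} : Set (HAlg α β γ))) ≃ₐ[ℝ] ℍ[ℝ]) := by
  have hd : 0 < discrim (α ^ 2 - 1) (-2 * (α * γ + β)) (γ ^ 2 - 1) := by
    rw [discrim_eq_four_mul_det]
    exact mul_pos four_pos hQ
  obtain ⟨x, y, hxy⟩ := exists_quadratic_eq_of_discrim_pos hd (-1)
  have hv := mul_self_eq_neg_one_of_relations (eH_mul_self α β γ 0) (eH_mul_self α β γ 1)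
    (eH_mul_self α β γ 2) (eH_mul_add_swap_zero_one α β γ) (eH_mul_add_swap_one_two α β γ)
    (eH_mul_add_swap_two_zero α β γ) hxy
  have hve := anticomm_of_relations (eH_mul_add_swap_zero_one α β γ)
    (eH_mul_add_swap_two_zero α β γ) x y
  exact ⟨x, y, _, rfl, hv, hve,
    Quaternion.nonempty_adjoin_algEquiv_of_anticomm (eH_mul_self α β γ 0) hv hve⟩
end

section
/- In the algebra H(-1) = ℍ ⊕ ℍc with c central and c² = -1 (biquaternions), an element w + c with w ∈ ℍ generates a proper left ideal ℍ(w+c) if and only if w is a purely imaginary unit quaternion (w² = -1); hence the set of proper left ideals is parametrized by the unit 2-sphere of imaginary quaternions, and H(-1) has no nontrivial two-sided ideals. -/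
/-- The defining relations of the algebra `H(ε) = ⟨i, j, c | i² = j² = -1, ij + ji = 0,
ic = ci, jc = cj, c² = ε⟩` (generators indexed `0 = i`, `1 = j`, `2 = c`). -/
inductive BRel (ε : ℝ) : FreeAlgebra ℝ (Fin 3) → FreeAlgebra ℝ (Fin 3) → Prop
  | isq : BRel ε (FreeAlgebra.ι ℝ 0 * FreeAlgebra.ι ℝ 0) (-1)
  | jsq : BRel ε (FreeAlgebra.ι ℝ 1 * FreeAlgebra.ι ℝ 1) (-1)
  | anti : BRel ε (FreeAlgebra.ι ℝ 0 * FreeAlgebra.ι ℝ 1 + FreeAlgebra.ι ℝ 1 * FreeAlgebra.ι ℝ 0) 0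
  | ic : BRel ε (FreeAlgebra.ι ℝ 0 * FreeAlgebra.ι ℝ 2) (FreeAlgebra.ι ℝ 2 * FreeAlgebra.ι ℝ 0)
  | jc : BRel ε (FreeAlgebra.ι ℝ 1 * FreeAlgebra.ι ℝ 2) (FreeAlgebra.ι ℝ 2 * FreeAlgebra.ι ℝ 1)
  | csq : BRel ε (FreeAlgebra.ι ℝ 2 * FreeAlgebra.ι ℝ 2) (algebraMap ℝ (FreeAlgebra ℝ (Fin 3)) ε)

/-- The algebra `H(ε) = ℍ ⊕ ℍc`. -/
abbrev BAlg (ε : ℝ) : Type := RingQuot (BRel ε)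

/-- The generators `i, j, c` of `H(ε)`. -/
noncomputable def gB (ε : ℝ) (k : Fin 3) : BAlg ε :=
  RingQuot.mkAlgHom ℝ (BRel ε) (FreeAlgebra.ι ℝ k)

/-- The quaternion subalgebra `ℍ ⊆ H(ε)`, generated by `i` and `j`. -/
noncomputable def quatSub (ε : ℝ) : Subalgebra ℝ (BAlg ε) :=
  Algebra.adjoin ℝ ({gB ε 0, gB ε 1} : Set (BAlg ε))

/-!
Every element of `H(-1)` is uniquely `p + q c` with `p, q ∈ ℍ`; uniqueness is seen in the
complex quaternions, where `c` acts as the scalar `I`. Since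
`(a + b c)(s + c) = (a s - b) + (a + b s) c`, for `s² = -1` the left ideal `ℍ(s + c)` consists
exactly of the `p + q c` with `p = q s`, so it is proper and determines `s`; for `s² ≠ -1` instead
`(s² + 1)⁻¹(s - c)` is a left inverse of `s + c`. A proper nonzero left ideal contains some
`p + q c` with `q ≠ 0` (it contains no nonzero element of `ℍ`, these being units), hence `s + c`
for `s = q⁻¹ p`, and then it is `ℍ(s + c)`. If it is also a right ideal it contains
`t (s + c) - (s + c) t = t s - s t` for every `t ∈ ℍ`, so `s` is central in `ℍ`, which is
impossible for `s² = -1`.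
-/

open Quaternion

section Complexification

variable {D A : Type*} [Ring A]

lemma add_mul_mul_add_mul [Ring D] {ψ : D →+* A} {c : A} (hc : ∀ p, Commute c (ψ p))
    (hc2 : c * c = -1) (p q p' q' : D) :
    (ψ p + ψ q * c) * (ψ p' + ψ q' * c) = ψ (p * p' - q * q') + ψ (p * q' + q * p') * c := by
  have hcq' : c * (ψ q' * c) = -ψ q' := by rw [← mul_assoc, (hc q').eq, mul_assoc, hc2, mul_neg_one]
  simp only [map_sub, map_add, map_mul, add_mul, mul_add, mul_assoc, (hc p').eq, hcq']
  noncomm_ring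

structure IsComplexification [DivisionRing D] (ψ : D →+* A) (c : A) : Prop where
  commute : ∀ p, Commute c (ψ p)
  mul_self : c * c = -1
  exists_add_mul : ∀ x, ∃ p q, ψ p + ψ q * c = x
  add_mul_eq_zero : ∀ {p q}, ψ p + ψ q * c = 0 → p = 0 ∧ q = 0

namespace IsComplexification

variable [DivisionRing D] {ψ : D →+* A} {c : A}

lemma add_mul_inj (h : IsComplexification ψ c) {p q p' q' : D} :
    ψ p + ψ q * c = ψ p' + ψ q' * c ↔ p = p' ∧ q = q' := by
  refine ⟨fun hpq ↦ ?_, fun ⟨hp, hq⟩ ↦ hp ▸ hq ▸ rfl⟩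
  have := h.add_mul_eq_zero (p := p - p') (q := q - q') (by
    rw [map_sub, map_sub, sub_mul, sub_add_sub_comm, hpq, sub_self])
  exact ⟨sub_eq_zero.1 this.1, sub_eq_zero.1 this.2⟩

lemma injective (h : IsComplexification ψ c) : Function.Injective ψ := fun p p' hp ↦
  (h.add_mul_inj (q := 0) (q' := 0)).1 (by rw [hp]) |>.1

lemma span_eq_top_of_mul_self_ne (h : IsComplexification ψ c) {s : D} (hs : s * s ≠ -1) :
    Ideal.span {ψ s + c} = ⊤ := by
  have hu : s * s + 1 ≠ 0 := fun hu ↦ hs (eq_neg_of_add_eq_zero_left hu)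
  set u := s * s + 1
  have hinv : (ψ (u⁻¹ * s) + ψ (-u⁻¹) * c) * (ψ s + ψ 1 * c) = 1 := by
    have h1 : u⁻¹ * s * s - -u⁻¹ * 1 = 1 := by
      rw [mul_assoc, mul_one, sub_neg_eq_add, ← mul_add_one, inv_mul_cancel₀ hu]
    have h2 : u⁻¹ * s * 1 + -u⁻¹ * s = 0 := by rw [mul_one, neg_mul, add_neg_cancel]
    rw [add_mul_mul_add_mul h.commute h.mul_self, h1, h2, map_one, map_zero, zero_mul, add_zero]
  rw [Ideal.eq_top_iff_one, ← hinv, map_one, one_mul]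
  exact Ideal.mul_mem_left _ _ (Ideal.mem_span_singleton_self _)

lemma mem_span_iff (h : IsComplexification ψ c) {s : D} (hs : s * s = -1) {p q : D} :
    ψ p + ψ q * c ∈ Ideal.span {ψ s + c} ↔ p = q * s := by
  rw [Ideal.mem_span_singleton']
  constructor
  · rintro ⟨a, ha⟩
    obtain ⟨p₀, q₀, rfl⟩ := h.exists_add_mul a
    rw [show ψ s + c = ψ s + ψ 1 * c by rw [map_one, one_mul],
      add_mul_mul_add_mul h.commute h.mul_self, h.add_mul_inj] at ha
    rw [← ha.1, ← ha.2, add_mul, mul_assoc q₀, hs]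
    noncomm_ring
  · rintro rfl
    exact ⟨ψ q, by rw [mul_add, ← map_mul]⟩

lemma span_ne_top_iff (h : IsComplexification ψ c) {s : D} :
    Ideal.span {ψ s + c} ≠ ⊤ ↔ s * s = -1 := by
  refine ⟨not_imp_comm.1 h.span_eq_top_of_mul_self_ne, fun hs htop ↦ ?_⟩
  have h1 : ψ 1 + ψ 0 * c ∈ Ideal.span {ψ s + c} := by
    rw [htop, map_one, map_zero, zero_mul, add_zero]; exact Submodule.mem_top
  rw [h.mem_span_iff hs, zero_mul] at h1
  exact one_ne_zero h1

lemma span_ne_bot (h : IsComplexification ψ c) (s : D) : Ideal.span {ψ s + c} ≠ ⊥ := by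
  rw [Ne, Ideal.span_singleton_eq_bot, ← one_mul c, ← map_one ψ]
  exact fun h0 ↦ one_ne_zero (h.add_mul_eq_zero h0).2

lemma eq_of_span_eq (h : IsComplexification ψ c) {s₁ s₂ : D} (hs₂ : s₂ * s₂ = -1)
    (hspan : Ideal.span {ψ s₁ + c} = Ideal.span {ψ s₂ + c}) : s₁ = s₂ := by
  have hmem : ψ s₁ + ψ 1 * c ∈ Ideal.span {ψ s₂ + c} := by
    rw [← hspan, map_one, one_mul]; exact Ideal.mem_span_singleton_self _
  rwa [h.mem_span_iff hs₂, one_mul] at hmem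

lemma exists_eq_span (h : IsComplexification ψ c) {I : Ideal A} (hbot : I ≠ ⊥) (htop : I ≠ ⊤) :
    ∃ s, s * s = -1 ∧ I = Ideal.span {ψ s + c} := by
  have ne_top_of_mem {d : D} (hd : d ≠ 0) (hdI : ψ d ∈ I) : False :=
    htop (Ideal.eq_top_of_isUnit_mem _ hdI ((Ne.isUnit hd).map ψ))
  obtain ⟨x, hxI, hx0⟩ := Submodule.exists_mem_ne_zero_of_ne_bot hbot
  obtain ⟨p, q, rfl⟩ := h.exists_add_mul x
  have hq : q ≠ 0 := by
    rintro rfl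
    rw [map_zero, zero_mul, add_zero] at hxI hx0
    exact ne_top_of_mem (fun hp ↦ hx0 (by rw [hp, map_zero])) hxI
  set s := q⁻¹ * p
  have hsI : ψ s + c ∈ I := by
    have := I.mul_mem_left (ψ q⁻¹) hxI
    rwa [mul_add, ← mul_assoc, ← map_mul, ← map_mul, inv_mul_cancel₀ hq, map_one, one_mul] at this
  clear_value s
  have hs : s * s = -1 := by
    refine h.span_ne_top_iff.1 (ne_top_of_le_ne_top htop ?_)
    rwa [Ideal.span_le, Set.singleton_subset_iff]
  refine ⟨s, hs, le_antisymm (fun y hyI ↦ ?_) ((Ideal.span_singleton_le_iff_mem I).2 hsI)⟩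
  obtain ⟨p', q', rfl⟩ := h.exists_add_mul y
  rw [h.mem_span_iff hs]
  by_contra hne
  refine ne_top_of_mem (sub_ne_zero.2 hne) ?_
  have : ψ p' + ψ q' * c - ψ q' * (ψ s + c) = ψ (p' - q' * s) := by
    rw [mul_add, map_sub, map_mul]; abel
  exact this ▸ I.sub_mem hyI (I.mul_mem_left _ hsI)

lemma mem_center_of_mem (h : IsComplexification ψ c) {I : Ideal A}
    (hI : ∀ x ∈ I, ∀ a, x * a ∈ I) (htop : I ≠ ⊤) {s : D} (hsI : ψ s + c ∈ I) :
    s ∈ Subring.center D := by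
  refine Subring.mem_center_iff.2 fun t ↦ sub_eq_zero.1 (by_contra fun hne ↦ htop ?_)
  refine Ideal.eq_top_of_isUnit_mem _ ?_ ((Ne.isUnit hne).map ψ)
  have : ψ t * (ψ s + c) - (ψ s + c) * ψ t = ψ (t * s - s * t) := by
    rw [mul_add, add_mul, (h.commute t).eq, map_sub, map_mul, map_mul]; abel
  exact this ▸ I.sub_mem (I.mul_mem_left _ hsI) (hI _ hsI _)

lemma eq_bot_or_eq_top (h : IsComplexification ψ c)
    (hD : ∀ s ∈ Subring.center D, s * s ≠ -1) {I : Ideal A} (hI : ∀ x ∈ I, ∀ a, x * a ∈ I) :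
    I = ⊥ ∨ I = ⊤ := by
  by_contra! hne
  obtain ⟨s, hs, rfl⟩ := h.exists_eq_span hne.1 hne.2
  exact hD s (h.mem_center_of_mem hI hne.2 (Ideal.mem_span_singleton_self _)) hs

end IsComplexification

end Complexification

lemma QuaternionAlgebra.mul_self_ne_neg_one_of_mem_center {R : Type*} [Field R] [LinearOrder R]
    [IsStrictOrderedRing R] {s : ℍ[R,-1,0,-1]} (hs : s ∈ Subring.center ℍ[R,-1,0,-1]) :
    s * s ≠ -1 := by
  have hi := Subring.mem_center_iff.1 hs ⟨0, 1, 0, 0⟩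
  have hj := Subring.mem_center_iff.1 hs ⟨0, 0, 1, 0⟩
  simp only [QuaternionAlgebra.ext_iff] at hi hj
  simp at hi hj
  intro hss
  simp [QuaternionAlgebra.ext_iff] at hss
  nlinarith [sq_nonneg s.re]

namespace BAlg

variable {ε : ℝ}

lemma i_mul_i : gB ε 0 * gB ε 0 = -1 := by
  simpa [gB] using RingQuot.mkAlgHom_rel ℝ (BRel.isq (ε := ε))

lemma j_mul_j : gB ε 1 * gB ε 1 = -1 := by
  simpa [gB] using RingQuot.mkAlgHom_rel ℝ (BRel.jsq (ε := ε))

lemma j_mul_i : gB ε 1 * gB ε 0 = -(gB ε 0 * gB ε 1) :=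
  eq_neg_of_add_eq_zero_right (by simpa [gB] using RingQuot.mkAlgHom_rel ℝ (BRel.anti (ε := ε)))

lemma i_mul_c : gB ε 0 * gB ε 2 = gB ε 2 * gB ε 0 := by
  simpa [gB] using RingQuot.mkAlgHom_rel ℝ (BRel.ic (ε := ε))

lemma j_mul_c : gB ε 1 * gB ε 2 = gB ε 2 * gB ε 1 := by
  simpa [gB] using RingQuot.mkAlgHom_rel ℝ (BRel.jc (ε := ε))

lemma c_mul_c : gB ε 2 * gB ε 2 = algebraMap ℝ _ ε := by
  simpa [gB] using RingQuot.mkAlgHom_rel ℝ (BRel.csq (ε := ε))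

lemma c_mul_c_of_neg_one : gB (-1) 2 * gB (-1) 2 = -1 := by
  rw [c_mul_c, map_neg, map_one]

lemma adjoin_range_gB : Algebra.adjoin ℝ (Set.range (gB ε)) = ⊤ := by
  rw [show Set.range (gB ε) = RingQuot.mkAlgHom ℝ (BRel ε) '' Set.range (FreeAlgebra.ι ℝ) by
      rw [← Set.range_comp]; rfl,
    ← AlgHom.map_adjoin, FreeAlgebra.adjoin_range_ι, Algebra.map_top, AlgHom.range_eq_top]
  exact RingQuot.mkAlgHom_surjective ℝ _

lemma commute_c (x : BAlg ε) : Commute (gB ε 2) x := by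
  have hx : x ∈ Algebra.adjoin ℝ (Set.range (gB ε)) := adjoin_range_gB ▸ Algebra.mem_top
  induction hx using Algebra.adjoin_induction with
  | mem y hy =>
    obtain ⟨k, rfl⟩ := hy
    fin_cases k
    exacts [i_mul_c.symm, j_mul_c.symm, Commute.refl _]
  | algebraMap r => exact Algebra.commute_algebraMap_right r _
  | add y z _ _ hy hz => exact hy.add_right hz
  | mul y z _ _ hy hz => exact hy.mul_right hz

noncomputable def quaternionBasis (ε : ℝ) : QuaternionAlgebra.Basis (BAlg ε) (-1 : ℝ) 0 (-1) where
  i := gB ε 0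
  j := gB ε 1
  k := gB ε 0 * gB ε 1
  i_mul_i := by rw [i_mul_i]; module
  j_mul_j := by rw [j_mul_j]; module
  i_mul_j := rfl
  j_mul_i := by rw [j_mul_i, zero_smul, zero_sub]

noncomputable def ofQuaternion (ε : ℝ) : ℍ[ℝ] →ₐ[ℝ] BAlg ε := (quaternionBasis ε).liftHom

lemma ofQuaternion_apply (q : ℍ[ℝ]) : ofQuaternion ε q = algebraMap ℝ _ q.re + q.imI • gB ε 0 +
    q.imJ • gB ε 1 + q.imK • (gB ε 0 * gB ε 1) :=
  rfl

lemma ofQuaternion_i : ofQuaternion ε ⟨0, 1, 0, 0⟩ = gB ε 0 :=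
  (ofQuaternion_apply _).trans (by simp)

lemma ofQuaternion_j : ofQuaternion ε ⟨0, 0, 1, 0⟩ = gB ε 1 :=
  (ofQuaternion_apply _).trans (by simp)

lemma range_ofQuaternion : (ofQuaternion ε).range = quatSub ε := by
  apply le_antisymm
  · rintro _ ⟨q, rfl⟩
    have hi : gB ε 0 ∈ quatSub ε := Algebra.subset_adjoin (by simp)
    have hj : gB ε 1 ∈ quatSub ε := Algebra.subset_adjoin (by simp)
    change ofQuaternion ε q ∈ _
    rw [ofQuaternion_apply]
    exact add_mem (add_mem (add_mem (Subalgebra.algebraMap_mem _ _) (Subalgebra.smul_mem _ hi _))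
      (Subalgebra.smul_mem _ hj _)) (Subalgebra.smul_mem _ (mul_mem hi hj) _)
  · refine Algebra.adjoin_le ?_
    rintro _ (rfl | rfl)
    exacts [⟨_, ofQuaternion_i⟩, ⟨_, ofQuaternion_j⟩]

noncomputable def toComplexQuaternion : BAlg (-1) →ₐ[ℝ] ℍ[ℂ,-1,0,-1] :=
  RingQuot.liftAlgHom ℝ ⟨FreeAlgebra.lift ℝ ![⟨0, 1, 0, 0⟩, ⟨0, 0, 1, 0⟩, ⟨Complex.I, 0, 0, 0⟩], by
    rintro x y ⟨⟩ <;> ext <;> simp⟩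

lemma toComplexQuaternion_gB (k : Fin 3) : toComplexQuaternion (gB (-1) k) =
    ![⟨0, 1, 0, 0⟩, ⟨0, 0, 1, 0⟩, ⟨Complex.I, 0, 0, 0⟩] k := by
  rw [gB, toComplexQuaternion, RingQuot.liftAlgHom_mkAlgHom_apply, FreeAlgebra.lift_ι_apply]

lemma toComplexQuaternion_add_mul_c (p q : ℍ[ℝ]) :
    toComplexQuaternion (ofQuaternion (-1) p + ofQuaternion (-1) q * gB (-1) 2) =
      ⟨⟨p.re, q.re⟩, ⟨p.imI, q.imI⟩, ⟨p.imJ, q.imJ⟩, ⟨p.imK, q.imK⟩⟩ := by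
  simp only [ofQuaternion_apply, map_add, map_smul, map_mul, AlgHom.commutes,
    toComplexQuaternion_gB]
  ext <;> simp [Algebra.algebraMap_eq_smul_one, Complex.ext_iff]

lemma isComplexification :
    IsComplexification (ofQuaternion (-1) : ℍ[ℝ] →+* BAlg (-1)) (gB (-1) 2) where
  commute _ := commute_c _
  mul_self := c_mul_c_of_neg_one
  exists_add_mul x := by
    have hx : x ∈ Algebra.adjoin ℝ (Set.range (gB (-1))) := adjoin_range_gB ▸ Algebra.mem_top
    induction hx using Algebra.adjoin_induction with
    | mem y hy =>
      obtain ⟨k, rfl⟩ := hy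
      fin_cases k
      · exact ⟨⟨0, 1, 0, 0⟩, 0, by simp [ofQuaternion_i]⟩
      · exact ⟨⟨0, 0, 1, 0⟩, 0, by simp [ofQuaternion_j]⟩
      · exact ⟨0, 1, by simp⟩
    | algebraMap r =>
      refine ⟨algebraMap ℝ ℍ[ℝ] r, 0, ?_⟩
      rw [map_zero, zero_mul, add_zero]
      exact (ofQuaternion (-1)).commutes r
    | add y z _ _ hy hz =>
      obtain ⟨p, q, rfl⟩ := hy
      obtain ⟨p', q', rfl⟩ := hz
      exact ⟨p + p', q + q', by rw [map_add, map_add, add_mul]; abel⟩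
    | mul y z _ _ hy hz =>
      obtain ⟨p, q, rfl⟩ := hy
      obtain ⟨p', q', rfl⟩ := hz
      exact ⟨_, _, (add_mul_mul_add_mul (fun _ ↦ commute_c _) c_mul_c_of_neg_one p q p' q').symm⟩
  add_mul_eq_zero {p q} hpq := by
    have := congrArg toComplexQuaternion hpq
    simp only [RingHom.coe_coe, toComplexQuaternion_add_mul_c, map_zero] at this
    simp [QuaternionAlgebra.ext_iff, Complex.ext_iff] at this
    constructor <;> ext <;> simp [*]

end BAlg

/-- In the biquaternions `H(-1) = ℍ ⊕ ℍc` (`c` central, `c² = -1`), for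
`w ∈ ℍ` the left ideal generated by `w + c` is proper (nonzero and not everything) iff
`w² = -1`; every proper nonzero left ideal is of this form for a unique such `w` (so the
proper left ideals are parametrized by the 2-sphere of imaginary unit quaternions); and
`H(-1)` has no nontrivial two-sided ideals. -/
theorem stmt_14 :
    (∀ w ∈ quatSub (-1),
        (Ideal.span ({w + gB (-1) 2} : Set (BAlg (-1))) ≠ ⊥ ∧
            Ideal.span ({w + gB (-1) 2} : Set (BAlg (-1))) ≠ ⊤) ↔ w * w = -1) ∧
    (∀ I : Ideal (BAlg (-1)), I ≠ ⊥ → I ≠ ⊤ →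
        ∃ w ∈ quatSub (-1), w * w = -1 ∧
          I = Ideal.span ({w + gB (-1) 2} : Set (BAlg (-1)))) ∧
    (∀ w₁ ∈ quatSub (-1), ∀ w₂ ∈ quatSub (-1), w₁ * w₁ = -1 → w₂ * w₂ = -1 →
        Ideal.span ({w₁ + gB (-1) 2} : Set (BAlg (-1))) =
            Ideal.span ({w₂ + gB (-1) 2} : Set (BAlg (-1))) → w₁ = w₂) ∧
    (∀ I : Ideal (BAlg (-1)), (∀ x ∈ I, ∀ a : BAlg (-1), x * a ∈ I) →
        I = ⊥ ∨ I = ⊤) := by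
  have h := BAlg.isComplexification
  set ψ : ℍ[ℝ] →+* BAlg (-1) := (BAlg.ofQuaternion (-1) : ℍ[ℝ] →+* BAlg (-1))
  have mem_quatSub {w} : w ∈ quatSub (-1) ↔ ∃ s, ψ s = w := by
    rw [← BAlg.range_ofQuaternion, AlgHom.mem_range]; rfl
  have sq_iff (s : ℍ[ℝ]) : ψ s * ψ s = -1 ↔ s * s = -1 := by
    rw [← map_mul, ← map_one ψ, ← map_neg, h.injective.eq_iff]
  refine ⟨fun w hw ↦ ?_, fun I hbot htop ↦ ?_, fun w₁ hw₁ w₂ hw₂ _ hw₂sq hspan ↦ ?_,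
    fun I hI ↦ h.eq_bot_or_eq_top (fun _ ↦ QuaternionAlgebra.mul_self_ne_neg_one_of_mem_center) hI⟩
  · obtain ⟨s, rfl⟩ := mem_quatSub.1 hw
    rw [sq_iff, ← h.span_ne_top_iff]
    exact and_iff_right (h.span_ne_bot s)
  · obtain ⟨s, hs, rfl⟩ := h.exists_eq_span hbot htop
    exact ⟨ψ s, mem_quatSub.2 ⟨s, rfl⟩, (sq_iff s).2 hs, rfl⟩
  · obtain ⟨s₁, rfl⟩ := mem_quatSub.1 hw₁
    obtain ⟨s₂, rfl⟩ := mem_quatSub.1 hw₂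
    exact congrArg ψ (h.eq_of_span_eq ((sq_iff s₂).1 hw₂sq) hspan)
end

section
/- Every finite-dimensional representation ρ : H(0) → End(V) of the dual quaternion algebra H(0) = ℍ ⊕ ℍc (c central, c² = 0) on a real vector space V decomposes as a direct sum k·ρ₈ ⊕ l·ρ₄, where ρ₈ is the (8-dimensional) regular representation and ρ₄ is the 4-dimensional representation obtained by composing the quotient map H(0) → ℍ with the regular representation of ℍ. The multiplicity k satisfies 4k = rank ρ(c). -/
open scoped Quaternion


open scoped Quaternion
open Module Submodule LinearMap

noncomputable section

/-- Span of the range of a basis of a submodule. -/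
lemma aux_span {W : Type*} [AddCommGroup W] [Module ℍ[ℝ] W]
    (p : Submodule ℍ[ℝ] W) (n : ℕ) (b : Basis (Fin n) ℍ[ℝ] p) :
    Submodule.span ℍ[ℝ] (Set.range fun i => ((b i : W))) = p := by
  have : (fun i => ((b i : W))) = p.subtype ∘ b := rfl
  rw [this, Set.range_comp, ← Submodule.map_span, b.span_eq, Submodule.map_top,
    Submodule.range_subtype]

/-- The basis lemma: any finite module over `ℍ` with a square-zero `ℍ`-linear endomorphism `E`
admits a basis adapted to `E`. -/
lemma aux_exists_basis (V : Type*) [AddCommGroup V] [Module ℍ[ℝ] V]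
    [Module.Finite ℍ[ℝ] V] (E : V →ₗ[ℍ[ℝ]] V) (hE2 : ∀ v, E (E v) = 0) :
    ∃ (k l : ℕ) (B : Basis (Fin k ⊕ (Fin k ⊕ Fin l)) ℍ[ℝ] V),
      (∀ i, E (B (Sum.inl i)) = B (Sum.inr (Sum.inl i))) ∧
      (∀ e, E (B (Sum.inr e)) = 0) ∧
      k = finrank ℍ[ℝ] (LinearMap.range E) := by
  set R := LinearMap.range E with hR
  set K := LinearMap.ker E with hKdef
  have hRK : R ≤ K := by
    rintro x ⟨y, rfl⟩
    exact hE2 y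
  set k := finrank ℍ[ℝ] R with hk
  let bR := finBasis ℍ[ℝ] R
  have hbR : ∀ i, ∃ x, E x = (bR i : V) := fun i => (bR i).2
  choose w hw using hbR
  let R' : Submodule ℍ[ℝ] K := R.comap K.subtype
  obtain ⟨L', hL'⟩ := Submodule.exists_isCompl R'
  set l := finrank ℍ[ℝ] L' with hl
  let bL := finBasis ℍ[ℝ] L'
  let u : Fin l → V := fun j => ((bL j : K) : V)
  have hu : ∀ j, E (u j) = 0 := fun j => (bL j : K).2
  let F : Fin k ⊕ (Fin k ⊕ Fin l) → V := Sum.elim w (Sum.elim (fun i => E (w i)) u)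
  have hRspan : span ℍ[ℝ] (Set.range fun i => E (w i)) = R := by
    have heq : (fun i => E (w i)) = fun i => ((bR i : V)) := funext hw
    rw [heq, aux_span]
  -- cardinality
  have hcard : Fintype.card (Fin k ⊕ (Fin k ⊕ Fin l)) = finrank ℍ[ℝ] V := by
    have h1 : finrank ℍ[ℝ] R + finrank ℍ[ℝ] K = finrank ℍ[ℝ] V :=
      LinearMap.finrank_range_add_finrank_ker E
    have h2 : finrank ℍ[ℝ] R' + finrank ℍ[ℝ] L' = finrank ℍ[ℝ] K :=
      Submodule.finrank_add_eq_of_isCompl hL'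
    have h3 : finrank ℍ[ℝ] R' = finrank ℍ[ℝ] R :=
      (Submodule.comapSubtypeEquivOfLe hRK).finrank_eq
    simp only [Fintype.card_sum, Fintype.card_fin]
    omega
  -- spanning
  have le_span : ⊤ ≤ span ℍ[ℝ] (Set.range F) := by
    set S := span ℍ[ℝ] (Set.range F) with hS
    have hRS : R ≤ S := by
      rw [← hRspan]
      apply span_le.2
      rintro x ⟨i, rfl⟩
      exact subset_span ⟨Sum.inr (Sum.inl i), rfl⟩
    have hwS : ∀ i, w i ∈ S := fun i => subset_span ⟨Sum.inl i, rfl⟩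
    have huS : ∀ j, u j ∈ S := fun j => subset_span ⟨Sum.inr (Sum.inr j), rfl⟩
    have hKS : K ≤ S := by
      intro x hx
      have hx' : (⟨x, hx⟩ : K) ∈ R' ⊔ L' := by
        rw [hL'.sup_eq_top]; trivial
      obtain ⟨r, hr, s, hs, hrs⟩ := Submodule.mem_sup.1 hx'
      have hxeq : x = (r : V) + (s : V) := by
        have := congrArg (Subtype.val) hrs
        simpa using this.symm
      rw [hxeq]
      refine S.add_mem (hRS hr) ?_
      -- (s : V) with s ∈ L' : need (s:V) ∈ S; L' spanned by bL
      have : ((s : K) : V) ∈ span ℍ[ℝ] (Set.range u) := by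
        have hsL : (s : K) ∈ span ℍ[ℝ] (Set.range fun j => ((bL j : K))) := by
          have : span ℍ[ℝ] (Set.range fun j => ((bL j : K))) = L' := aux_span L' l bL
          rw [this]; exact hs
        have hmap := Submodule.mem_map_of_mem (f := K.subtype) hsL
        rw [Submodule.map_span, ← Set.range_comp] at hmap
        exact hmap
      exact span_le.2 (by rintro y ⟨j, rfl⟩; exact huS j) this
    intro v _
    have hEv : E v ∈ R := ⟨v, rfl⟩
    have : E v ∈ Submodule.map E (span ℍ[ℝ] (Set.range w)) := by
      rw [Submodule.map_span, ← Set.range_comp]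
      show E v ∈ span ℍ[ℝ] (Set.range fun i => E (w i))
      rw [hRspan]; exact hEv
    obtain ⟨x, hxmem, hxe⟩ := this
    have hvx : v - x ∈ K := by
      simp only [hKdef, LinearMap.mem_ker, map_sub, hxe, sub_self]
    have hxS : x ∈ S := span_le.2 (by rintro y ⟨i, rfl⟩; exact hwS i) hxmem
    have : v = x + (v - x) := by abel
    rw [this]
    exact S.add_mem hxS (hKS hvx)
  let B := basisOfTopLeSpanOfCardEqFinrank F le_span hcard
  have hB : ⇑B = F := coe_basisOfTopLeSpanOfCardEqFinrank F le_span hcard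
  refine ⟨k, l, B, ?_, ?_, rfl⟩
  · intro i
    rw [hB]
    rfl
  · intro e
    rw [hB]
    rcases e with i | j
    · exact hE2 (w i)
    · exact hu j

open TrivSqZeroExt in
/-- Reshuffling coordinates: functions on a triple sum with quaternion values versus
pairs of dual-quaternion-valued and quaternion-valued tuples. -/
def aux_reshuffle (k l : ℕ) :
    ((Fin k ⊕ (Fin k ⊕ Fin l)) → ℍ[ℝ]) ≃ₗ[ℝ] (Fin k → DualNumber ℍ[ℝ]) × (Fin l → ℍ[ℝ]) where
  toFun h := (fun i => inl (h (Sum.inl i)) + inr (h (Sum.inr (Sum.inl i))),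
              fun j => h (Sum.inr (Sum.inr j)))
  invFun p := Sum.elim (fun i => fst (p.1 i)) (Sum.elim (fun i => snd (p.1 i)) p.2)
  map_add' h h' := by
    refine Prod.ext ?_ rfl
    funext i
    refine TrivSqZeroExt.ext ?_ ?_ <;> simp
  map_smul' r h := by
    refine Prod.ext ?_ rfl
    funext i
    refine TrivSqZeroExt.ext ?_ ?_ <;> simp
  left_inv h := by
    funext e
    rcases e with i | (i | j) <;> simp
  right_inv p := by
    refine Prod.ext ?_ rfl
    funext i
    exact inl_fst_add_inr_snd_eq _


set_option maxHeartbeats 1000000 in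
open TrivSqZeroExt in
/-- Every finite-dimensional real representation
`ρ : H(0) → End(V)` of the dual quaternion algebra `H(0) = ℍ ⊕ ℍc` decomposes as
`k·ρ₈ ⊕ l·ρ₄`, where `ρ₈` is the regular representation and `ρ₄` is the pullback of the
regular representation of `ℍ` along the quotient map `H(0) → ℍ`; moreover
`4k = rank ρ(c)`. -/
theorem stmt_16 (V : Type*) [AddCommGroup V] [Module ℝ V] [FiniteDimensional ℝ V]
    (ρ : DualNumber ℍ[ℝ] →ₐ[ℝ] Module.End ℝ V) :
    ∃ (k l : ℕ) (f : V ≃ₗ[ℝ] (Fin k → DualNumber ℍ[ℝ]) × (Fin l → ℍ[ℝ])),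
      (∀ (a : DualNumber ℍ[ℝ]) (v : V),
        f (ρ a v) =
          ((fun i => a * (f v).1 i), fun j => TrivSqZeroExt.fst a * (f v).2 j)) ∧
      4 * k = Module.finrank ℝ (LinearMap.range (ρ DualNumber.eps)) := by
  letI instH : Module ℍ[ℝ] V :=
    Module.compHom V (ρ.toRingHom.comp (TrivSqZeroExt.inlHom ℍ[ℝ] ℍ[ℝ]))
  have hsmul : ∀ (q : ℍ[ℝ]) (v : V), q • v = ρ (TrivSqZeroExt.inl q) v := fun _ _ => rfl
  haveI : IsScalarTower ℝ ℍ[ℝ] V := by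
    constructor
    intro r q v
    rw [hsmul, hsmul]
    have h1 : (TrivSqZeroExt.inl (r • q) : DualNumber ℍ[ℝ]) = r • TrivSqZeroExt.inl q := by
      refine TrivSqZeroExt.ext ?_ ?_ <;> simp
    rw [h1, map_smul, LinearMap.smul_apply]
  haveI : Module.Finite ℍ[ℝ] V := Module.Finite.of_restrictScalars_finite ℝ ℍ[ℝ] V
  let E : V →ₗ[ℍ[ℝ]] V :=
    { toFun := ρ DualNumber.eps
      map_add' := fun x y => map_add _ x y
      map_smul' := fun q v => by
        show ρ DualNumber.eps (ρ (TrivSqZeroExt.inl q) v) = ρ (TrivSqZeroExt.inl q) (ρ DualNumber.eps v)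
        rw [← Module.End.mul_apply, ← Module.End.mul_apply,
          ← map_mul, ← map_mul, (DualNumber.commute_eps_left (TrivSqZeroExt.inl q)).eq] }
  have hE2 : ∀ v, E (E v) = 0 := by
    intro v
    show ρ DualNumber.eps (ρ DualNumber.eps v) = 0
    rw [← Module.End.mul_apply, ← map_mul, DualNumber.eps_mul_eps, map_zero,
      LinearMap.zero_apply]
  obtain ⟨k, l, B, hB1, hB2, hk⟩ := aux_exists_basis V E hE2
  have hEv : ∀ v : V, B.equivFun (E v) =
      Sum.elim (fun _ => 0) (Sum.elim (fun i => B.equivFun v (Sum.inl i)) fun _ => 0) := by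
    intro v
    rw [← LinearEquiv.eq_symm_apply]
    have hv : v = B.equivFun.symm (B.equivFun v) := (B.equivFun.symm_apply_apply v).symm
    conv_lhs => rw [hv, Basis.equivFun_symm_apply]
    rw [map_sum]
    simp only [map_smul]
    rw [Basis.equivFun_symm_apply, Fintype.sum_sum_type, Fintype.sum_sum_type,
      Fintype.sum_sum_type, Fintype.sum_sum_type]
    simp [hB1, hB2]
  have hρ : ∀ (a : DualNumber ℍ[ℝ]) (v : V),
      ρ a v = TrivSqZeroExt.fst a • v + TrivSqZeroExt.snd a • E v := by
    intro a v
    have ha : a = TrivSqZeroExt.inl (TrivSqZeroExt.fst a) + TrivSqZeroExt.inl (TrivSqZeroExt.snd a) * DualNumber.eps := by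
      refine TrivSqZeroExt.ext ?_ ?_ <;> simp
    conv_lhs => rw [ha]
    rw [map_add, LinearMap.add_apply, map_mul, Module.End.mul_apply, ← hsmul, ← hsmul]
    rfl
  refine ⟨k, l, (B.equivFun.restrictScalars ℝ).trans (aux_reshuffle k l), ?_, ?_⟩
  · intro a v
    simp only [LinearEquiv.trans_apply, LinearEquiv.restrictScalars_apply]
    rw [hρ, map_add, map_smul, map_smul, hEv]
    refine Prod.ext (funext fun i => TrivSqZeroExt.ext ?_ ?_) (funext fun j => ?_) <;>
      simp [aux_reshuffle, smul_eq_mul]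
  · have hr : LinearMap.range (ρ DualNumber.eps)
        = Submodule.restrictScalars ℝ (LinearMap.range E) := rfl
    rw [hk, hr]
    have e1 : Module.finrank ℝ (Submodule.restrictScalars ℝ (LinearMap.range E))
        = Module.finrank ℝ (LinearMap.range E) :=
      ((Submodule.restrictScalarsEquiv ℝ ℍ[ℝ] V (LinearMap.range E)).restrictScalars ℝ).finrank_eq
    have e2 : Module.finrank ℝ ℍ[ℝ] * Module.finrank ℍ[ℝ] (LinearMap.range E)
        = Module.finrank ℝ (LinearMap.range E) :=
      Module.finrank_mul_finrank ℝ ℍ[ℝ] _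
    rw [e1, ← e2, Quaternion.finrank_eq_four]
end
end
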